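/- Let d ≥ 2. Work in the complexified Clifford algebra of the real vector space with orthonormal basis {e_{c,0}, e_{c,1} : c a d-cube of the cubical lattice ℤ^d} (with respect to the standard positive-definite quadratic form), so that the generators γ_c := ι(e_{c,0}) and γ'_c := ι(e_{c,1}) satisfy γ_c² = γ'_c² = 1 and any two distinct generators anticommute. For a (d−1)-cell σ of the lattice perpendicular to the coordinate direction i, let ⁺σ and ⁻σ be the two d-cubes containing σ on its positive and negative x_i sides, and set (L(σ), R(σ)) = (⁻σ, ⁺σ) if i + d is odd and (L(σ), R(σ)) = (⁺σ, ⁻σ) if i + d is even. Define the hopping operator S_σ := i·γ_{L(σ)}·γ'_{R(σ)}. Then for any two (d−1)-cells σ, σ' of the lattice: S_σ S_{σ'} = (−1)^{∫ (𝟙_σ ∪_{d−2} 𝟙_{σ'} + 𝟙_{σ'} ∪_{d−2} 𝟙_σ)} · S_{σ'} S_σ. -/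

import Mathlib

/-!
Each hopping operator is `i` times an unprimed and a primed Majorana generator. Distinct
generators anticommute, so `S_σ S_σ' = ± S_σ' S_σ`, where the two cross pairs (unprimed against
primed) contribute `-1` each and the sign is `(-1)^([L(σ) = L(σ')] + [R(σ) = R(σ')])`.

On the cochain side, a pair in `Int_{d-2}` that maps a `d`-cube onto `σ` and `σ'` must consist of
the two `(d-1)`-faces of that cube perpendicular to `i` and to `i'`, so `i ≠ i'`, and the parity
condition fixes the side of each face. Hence `∫ 𝟙_σ ∪_{d-2} 𝟙_σ'` just asks whether the two
cubes chosen this way coincide. A parity count shows that the cubes chosen for `(σ, σ')` are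
either `(L(σ), L(σ'))` or `(R(σ), R(σ'))`, and those chosen for `(σ', σ)` are the other pair,
so the exponent is `[L(σ) = L(σ')] + [R(σ) = R(σ')]` mod 2.
-/

/-- The three possible entries of a cell label of the hypercube:
`dot` = `•` (a spanned direction), `pls` = `+`, `mns` = `−`. -/
inductive Sgn : Type
  | dot : Sgn
  | pls : Sgn
  | mns : Sgn
  deriving DecidableEq

instance instFintypeSgn : Fintype Sgn :=
  ⟨{Sgn.dot, Sgn.pls, Sgn.mns}, fun x => by cases x <;> simp⟩

/-- A cell of the `d`-dimensional hypercube, labeled by a tuple in `{•,+,−}^d`. -/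
abbrev Cell (d : ℕ) := Fin d → Sgn

/-- A `ℤ₂`-cochain on the `d`-dimensional hypercube. -/
abbrev Cochain (d : ℕ) := Cell d → ZMod 2

/-- The top cell `(•,…,•)`. -/
def topCell (d : ℕ) : Cell d := fun _ => Sgn.dot

/-- The set of coordinates of a cell labeled `•`. -/
def dots {d : ℕ} (w : Cell d) : Finset (Fin d) :=
  Finset.univ.filter (fun j => w j = Sgn.dot)

/-- The coboundary of a `ℤ₂`-cochain: `(δα)(w)` is the sum of `α` over all cells obtained
from `w` by replacing exactly one entry equal to `•` by `+` or by `−`. -/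
def delta {d : ℕ} (α : Cochain d) : Cochain d := fun w =>
  ∑ j ∈ dots w, (α (Function.update w j Sgn.pls) + α (Function.update w j Sgn.mns))

/-- The set of coordinates where both `z` and `z'` are `•`. -/
def bothDot {d : ℕ} (z z' : Cell d) : Finset (Fin d) :=
  Finset.univ.filter (fun j => z j = Sgn.dot ∧ z' j = Sgn.dot)

/-- The allowed values of `(z_j, z'_j)` at a coordinate `j` not in the common-`•` set `I`:
`(+,•)` or `(•,−)` when `ℓ(j) = #{i ∈ I : i < j}` is even, and `(−,•)` or `(•,+)` when it
is odd. -/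
def pairCond {d : ℕ} (I : Finset (Fin d)) (j : Fin d) (a b : Sgn) : Prop :=
  if (I.filter (fun i => i < j)).card % 2 = 0 then
    (a = Sgn.pls ∧ b = Sgn.dot) ∨ (a = Sgn.dot ∧ b = Sgn.mns)
  else
    (a = Sgn.mns ∧ b = Sgn.dot) ∨ (a = Sgn.dot ∧ b = Sgn.pls)

/-- The pairs `(z,z')` appearing in the `m`-th higher cup product evaluated on the cell `w`:
the entries of `w` equal to `+` or `−` are fixed in both arguments, there are exactly `m`
coordinates where both `z` and `z'` are `•`, and at the remaining `•`-coordinates of `w`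
the parity condition `pairCond` holds. -/
def IntPair {d : ℕ} (m : ℕ) (w z z' : Cell d) : Prop :=
  (∀ j, w j ≠ Sgn.dot → z j = w j ∧ z' j = w j) ∧
    (bothDot z z').card = m ∧
    ∀ j, w j = Sgn.dot → j ∉ bothDot z z' → pairCond (bothDot z z') j (z j) (z' j)

open Classical in
/-- The finite set of pairs in `Int_m` relative to the cell `w`. -/
noncomputable def intPairs {d : ℕ} (m : ℕ) (w : Cell d) : Finset (Cell d × Cell d) :=
  Finset.univ.filter (fun p => IntPair m w p.1 p.2)

/-- The higher cup product `α ∪_m β` of `ℤ₂`-cochains: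
`(α ∪_m β)(w) = Σ_{(z,z') ∈ Int_m(w)} α(z)·β(z')`. -/
noncomputable def cup {d : ℕ} (m : ℕ) (α β : Cochain d) : Cochain d := fun w =>
  ∑ p ∈ intPairs m w, α p.1 * β p.2

/-- A point of the cubical lattice `ℤ^d`. -/
abbrev Pt (d : ℕ) := Fin d → ℤ

/-- A cell of the cubical lattice `ℤ^d`: a pair `(x, S)` with `x ∈ ℤ^d` and
`S ⊆ {1,…,d}`, representing `∏_{i∈S}[x_i, x_i+1] × ∏_{i∉S}{x_i}`;
its dimension is `|S|`, and a `d`-cube is a cell with `S = univ`. -/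
abbrev LatCell (d : ℕ) := Pt d × Finset (Fin d)

/-- A `ℤ₂`-cochain on the cubical lattice `ℤ^d`. -/
abbrev LatCochain (d : ℕ) := LatCell d → ZMod 2

/-- The pairs `(z,z')` of tuples in `{•,+,−}^d` appearing in the `m`-th higher cup product
evaluated on a cell with spanned directions `S`: entries outside `S` are a fixed dummy
value (`+`, irrelevant to the evaluated subcells), there are exactly `m` coordinates where
both `z` and `z'` are `•`, and at the remaining coordinates of `S` the parity condition
`pairCond` of `Int_m` holds. -/
def IntPairS {d : ℕ} (m : ℕ) (S : Finset (Fin d)) (z z' : Fin d → Sgn) : Prop :=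
  (∀ j ∉ S, z j = Sgn.pls ∧ z' j = Sgn.pls) ∧
    (bothDot z z').card = m ∧
    ∀ j ∈ S, j ∉ bothDot z z' → pairCond (bothDot z z') j (z j) (z' j)

/-- The subcell of the lattice cell `(x, S)` determined by the tuple `z` on the spanned
directions `S`: direction `j ∈ S` with `z j = •` stays spanned, `z j = +` picks the larger
face (coordinate `x j + 1`), `z j = −` picks the smaller face (coordinate `x j`);
coordinates outside `S` are held fixed. -/
def cellFrom {d : ℕ} (x : Pt d) (S : Finset (Fin d)) (z : Fin d → Sgn) : LatCell d :=
  (fun j => if j ∈ S ∧ z j = Sgn.pls then x j + 1 else x j,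
    S.filter (fun j => z j = Sgn.dot))

open Classical in
/-- The higher cup product `α ∪_m β` of `ℤ₂`-cochains on the cubical lattice `ℤ^d`,
evaluated on each cell via the identification of its subcells with tuples in `{•,+,−}^d`,
using the hypercubic formula `(α ∪_m β)(w) = Σ_{(z,z') ∈ Int_m} α(z) β(z')`. -/
noncomputable def latCup {d : ℕ} (m : ℕ) (α β : LatCochain d) : LatCochain d := fun w =>
  ∑ p ∈ (Finset.univ.filter
      (fun p : (Fin d → Sgn) × (Fin d → Sgn) => IntPairS m w.2 p.1 p.2)),
    α (cellFrom w.1 w.2 p.1) * β (cellFrom w.1 w.2 p.2)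

/-- Coboundary of a lattice `ℤ₂`-cochain: `(δα)(w)` is the sum of `α` over the boundary
cells of `w` (the cells obtained by unspanning one direction of `w` to its smaller or
larger face). -/
def latDelta {d : ℕ} (α : LatCochain d) : LatCochain d := fun w =>
  ∑ j ∈ w.2,
    (α (w.1, w.2.erase j) + α (Function.update w.1 j (w.1 j + 1), w.2.erase j))

/-- The indicator cochain of a lattice cell. -/
def indLat {d : ℕ} (c : LatCell d) : LatCochain d := fun w => if w = c then 1 else 0

/-- `∫γ`: the sum of the values of a lattice cochain over all `d`-cubes of the lattice
(as a `finsum`; the cochains to which this is applied have finite support). -/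
noncomputable def intLat {d : ℕ} (α : LatCochain d) : ZMod 2 :=
  ∑ᶠ x : Pt d, α (x, Finset.univ)

open scoped TensorProduct

/-- The index set of the Majorana generators: one pair `(γ_c, γ'_c)` for each `d`-cube `c`
of the cubical lattice `ℤ^d` (a `d`-cube is identified with its base point `x ∈ ℤ^d`). -/
abbrev GenIdx (d : ℕ) := Pt d × Fin 2

/-- The real vector space with orthonormal basis indexed by `GenIdx d`. -/
abbrev GenSpace (d : ℕ) := GenIdx d →₀ ℝ

/-- The standard (positive-definite) bilinear form on `GenSpace d`, for which the basis
`{single i 1}` is orthonormal: `B f g = Σ_i f i * g i`. -/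
noncomputable def stdBilin (d : ℕ) : GenSpace d →ₗ[ℝ] GenSpace d →ₗ[ℝ] ℝ :=
  Finsupp.lsum ℝ (fun i => LinearMap.smulRight (LinearMap.id : ℝ →ₗ[ℝ] ℝ) (Finsupp.lapply i))

/-- The standard positive-definite quadratic form on `GenSpace d`. -/
noncomputable def stdQuadForm (d : ℕ) : QuadraticForm ℝ (GenSpace d) :=
  LinearMap.BilinMap.toQuadraticMap (stdBilin d)

/-- The complexified Clifford algebra of `(GenSpace d, stdQuadForm d)`. -/
noncomputable abbrev Cliff (d : ℕ) :=
  CliffordAlgebra (QuadraticForm.baseChange ℂ (stdQuadForm d))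

/-- The Majorana generator `γ_c` attached to the `d`-cube `c`. -/
noncomputable def γMaj {d : ℕ} (c : Pt d) : Cliff d :=
  CliffordAlgebra.ι (QuadraticForm.baseChange ℂ (stdQuadForm d))
    ((1 : ℂ) ⊗ₜ[ℝ] Finsupp.single (c, (0 : Fin 2)) (1 : ℝ))

/-- The Majorana generator `γ'_c` attached to the `d`-cube `c`. -/
noncomputable def γMaj' {d : ℕ} (c : Pt d) : Cliff d :=
  CliffordAlgebra.ι (QuadraticForm.baseChange ℂ (stdQuadForm d))
    ((1 : ℂ) ⊗ₜ[ℝ] Finsupp.single (c, (1 : Fin 2)) (1 : ℝ))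

/-- The `(d−1)`-cell of the lattice with base point `x` perpendicular to the coordinate
direction `i`. -/
def sigmaCell {d : ℕ} (x : Pt d) (i : Fin d) : LatCell d := (x, Finset.univ.erase i)

/-- `⁻σ`: the `d`-cube containing the `(d−1)`-cell `sigmaCell x i` on its negative
`x_i` side. (The cube on the positive side, `⁺σ`, has base point `x` itself.) -/
def negCube {d : ℕ} (x : Pt d) (i : Fin d) : Pt d := Function.update x i (x i - 1)

/-- The hopping operator `S_σ := i·γ_{L(σ)}·γ'_{R(σ)}` of the `(d−1)`-cell
`σ = sigmaCell x i`, with `(L(σ), R(σ)) = (⁻σ, ⁺σ)` if `i + d` is odd (`1`-based,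
so `i + d = i.val + 1 + d`) and `(L(σ), R(σ)) = (⁺σ, ⁻σ)` if `i + d` is even. -/
noncomputable def Sop {d : ℕ} (x : Pt d) (i : Fin d) : Cliff d :=
  if (i.val + 1 + d) % 2 = 1 then
    Complex.I • (γMaj (negCube x i) * γMaj' x)
  else
    Complex.I • (γMaj x * γMaj' (negCube x i))

section

open Finset

variable {d : ℕ}

lemma stdBilin_single_single (v w : GenIdx d) :
    stdBilin d (Finsupp.single v 1) (Finsupp.single w 1) = if v = w then 1 else 0 := by
  simp [stdBilin, Finsupp.single_apply, eq_comm]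

lemma stdQuadForm_isOrtho_single {v w : GenIdx d} (h : v ≠ w) :
    (stdQuadForm d).IsOrtho (Finsupp.single v 1) (Finsupp.single w 1) := by
  rw [QuadraticMap.isOrtho_def]
  simp [stdQuadForm, stdBilin_single_single, h, h.symm]

noncomputable def majorana (v : GenIdx d) : Cliff d :=
  CliffordAlgebra.ι _ ((1 : ℂ) ⊗ₜ[ℝ] Finsupp.single v (1 : ℝ))

lemma majorana_mul_comm (v w : GenIdx d) :
    majorana v * majorana w = (if v = w then 1 else -1 : ℂ) • (majorana w * majorana v) := by
  split_ifs with h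
  · rw [h, one_smul]
  · rw [neg_one_smul]
    refine CliffordAlgebra.ι_mul_ι_comm_of_isOrtho ?_
    rw [QuadraticMap.isOrtho_def, ← TensorProduct.tmul_add, QuadraticForm.baseChange_tmul,
      QuadraticMap.isOrtho_def.mp (stdQuadForm_isOrtho_single h), add_smul,
      QuadraticForm.baseChange_tmul, QuadraticForm.baseChange_tmul]

lemma mul_mul_comm_of_smul_comm {R A : Type*} [CommSemiring R] [Semiring A] [Algebra R A]
    {a b c e : A} {r₁ r₂ r₃ r₄ : R} (hac : a * c = r₁ • (c * a)) (hae : a * e = r₂ • (e * a))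
    (hbc : b * c = r₃ • (c * b)) (hbe : b * e = r₄ • (e * b)) :
    a * b * (c * e) = (r₁ * r₂ * r₃ * r₄) • (c * e * (a * b)) := by
  calc a * b * (c * e) = a * (b * c) * e := by simp only [mul_assoc]
    _ = r₃ • (a * c * (b * e)) := by rw [hbc]; simp only [mul_assoc, smul_mul_assoc, mul_smul_comm]
    _ = (r₃ * r₄ * r₁) • (c * (a * e) * b) := by
      rw [hbe, hac]; simp only [mul_assoc, smul_mul_assoc, mul_smul_comm, smul_smul]
    _ = _ := by
      rw [hae]; simp only [mul_assoc, smul_mul_assoc, mul_smul_comm, smul_smul]; congr 1; ring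

/-- For `σ = sigmaCell x i`: `adjCube x i true = ⁻σ` (σ is its `+` face in direction `i`) and
`adjCube x i false = ⁺σ`. -/
def adjCube (x : Pt d) (i : Fin d) (b : Bool) : Pt d := if b then negCube x i else x

lemma adjCube_inj {x x' : Pt d} {i : Fin d} {b : Bool} :
    adjCube x i b = adjCube x' i b ↔ x = x' := by
  refine ⟨fun h => ?_, fun h => h ▸ rfl⟩
  cases b
  · exact h
  · funext j
    have hj := congrFun h j
    by_cases hji : j = i
    · subst hji
      simpa [adjCube, negCube] using hj
    · simpa [adjCube, negCube, hji] using hj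

/-- `L(σ) = adjCube x i (hopParity d i)` and `R(σ) = adjCube x i (!hopParity d i)`. -/
def hopParity (d : ℕ) (i : Fin d) : Bool := decide ((i.val + 1 + d) % 2 = 1)

lemma Sop_eq (x : Pt d) (i : Fin d) :
    Sop x i = Complex.I • (majorana (adjCube x i (hopParity d i), 0) *
      majorana (adjCube x i (!hopParity d i), 1)) := by
  unfold Sop hopParity adjCube
  split_ifs <;> simp_all <;> rfl

lemma Sop_mul_Sop (x x' : Pt d) (i i' : Fin d) :
    Sop x i * Sop x' i' =
      ((if adjCube x i (hopParity d i) = adjCube x' i' (hopParity d i') then 1 else -1) *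
        (if adjCube x i (!hopParity d i) = adjCube x' i' (!hopParity d i') then 1 else -1) : ℂ) •
        (Sop x' i' * Sop x i) := by
  rw [Sop_eq, Sop_eq, smul_mul_smul_comm, smul_mul_smul_comm, mul_mul_comm_of_smul_comm
    (majorana_mul_comm _ _) (majorana_mul_comm _ _) (majorana_mul_comm _ _) (majorana_mul_comm _ _),
    smul_smul, smul_smul]
  congr 1
  split_ifs <;> simp_all [Prod.ext_iff]

def faceLabel (i : Fin d) (b : Bool) : Fin d → Sgn :=
  Function.update (topCell d) i (if b then Sgn.pls else Sgn.mns)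

lemma faceLabel_eq_dot_iff {i j : Fin d} {b : Bool} : faceLabel i b j = Sgn.dot ↔ j ≠ i := by
  by_cases hj : j = i
  · subst hj; cases b <;> simp [faceLabel]
  · simp [faceLabel, topCell, hj]

lemma cellFrom_univ_eq_sigmaCell_iff {y x : Pt d} {z : Fin d → Sgn} {i : Fin d} :
    cellFrom y univ z = sigmaCell x i ↔ ∃ b, z = faceLabel i b ∧ y = adjCube x i b := by
  constructor
  · intro h
    simp only [cellFrom, sigmaCell, Prod.mk.injEq, mem_univ, true_and] at h
    obtain ⟨hy, hz⟩ := h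
    have hdot : ∀ j, z j = Sgn.dot ↔ j ≠ i := fun j => by simpa using Finset.ext_iff.mp hz j
    refine ⟨decide (z i = Sgn.pls), funext fun j => ?_, funext fun j => ?_⟩
    · by_cases hj : j = i
      · subst hj
        have := (hdot j).not.2 (not_not.2 rfl)
        cases hzj : z j <;> simp_all [faceLabel]
      · simp [faceLabel, topCell, hj, (hdot j).2 hj]
    · have := congrFun hy j
      by_cases hj : j = i
      · subst hj
        cases hzj : z j <;> simp_all [adjCube, negCube]
        omega
      · rw [(hdot j).2 hj, if_neg (by decide)] at this
        cases decide (z i = Sgn.pls) <;> simp [adjCube, negCube, hj, this]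
  · rintro ⟨b, rfl, rfl⟩
    refine Prod.ext (funext fun j => ?_) (Finset.ext fun j => ?_)
    · by_cases hj : j = i
      · subst hj; cases b <;> simp [cellFrom, sigmaCell, faceLabel, adjCube, negCube]
      · cases b <;> simp [cellFrom, sigmaCell, faceLabel, adjCube, negCube, topCell, hj]
    · simp [sigmaCell, cellFrom, faceLabel_eq_dot_iff]

lemma bothDot_faceLabel (i i' : Fin d) (b b' : Bool) :
    bothDot (faceLabel i b) (faceLabel i' b') = {i, i'}ᶜ := by
  ext j
  simp [bothDot, faceLabel_eq_dot_iff]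

lemma card_filter_lt_compl_pair (i i' : Fin d) :
    (({i, i'}ᶜ : Finset (Fin d)).filter (· < i)).card + (if i' < i then 1 else 0) = i.val := by
  have hs : ({i, i'}ᶜ : Finset (Fin d)).filter (· < i) = (Iio i).erase i' := by
    ext k
    simp only [mem_filter, mem_compl, mem_insert, mem_singleton, not_or, mem_erase, mem_Iio]
    exact ⟨fun ⟨⟨_, h'⟩, hk⟩ => ⟨h', hk⟩, fun ⟨h', hk⟩ => ⟨⟨hk.ne, h'⟩, hk⟩⟩
  rw [hs]
  split_ifs with hlt
  · rw [card_erase_of_mem (mem_Iio.2 hlt), Fin.card_Iio]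
    have : i'.val < i.val := hlt
    omega
  · rw [erase_eq_of_notMem (by simpa using hlt), Fin.card_Iio, add_zero]

/-- The side of the `i`-face in the only pair of `(d-1)`-face labels admitted by
`IntPairS (d - 2)`: for `I = {i, i'}ᶜ`, the count `ℓ(i)` in `pairCond` is `i - [i' < i]`. -/
def cupSide (i i' : Fin d) : Bool := decide ((i.val + if i' < i then 1 else 0) % 2 = 0)

lemma intPairS_faceLabel_iff (hd : 2 ≤ d) {i i' : Fin d} {b b' : Bool} :
    IntPairS (d - 2) univ (faceLabel i b) (faceLabel i' b') ↔
      i ≠ i' ∧ b = cupSide i i' ∧ b' = !cupSide i' i := by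
  unfold IntPairS
  rw [bothDot_faceLabel]
  by_cases hii : i = i'
  · subst hii
    have hcard : ({i}ᶜ : Finset (Fin d)).card ≠ d - 2 := by
      rw [card_compl, card_singleton, Fintype.card_fin]
      omega
    simp [hcard]
  · have hcard : ({i, i'}ᶜ : Finset (Fin d)).card = d - 2 := by
      rw [card_compl, card_pair hii, Fintype.card_fin]
    have hi := card_filter_lt_compl_pair i i'
    have hi' := card_filter_lt_compl_pair i' i
    rw [pair_comm] at hi'
    simp only [hcard, mem_univ, true_and, mem_compl, not_not, mem_insert, mem_singleton,
      forall_const, forall_eq_or_imp, forall_eq]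
    simp only [pairCond]
    generalize (({i, i'}ᶜ : Finset (Fin d)).filter (· < i)).card = l at hi ⊢
    generalize (({i, i'}ᶜ : Finset (Fin d)).filter (· < i')).card = l' at hi' ⊢
    rcases lt_or_gt_of_ne hii with h | h <;> cases b <;> cases b' <;>
      simp [faceLabel, topCell, cupSide, Function.update_apply, hii, Ne.symm hii, h,
        not_lt_of_gt h] at hi hi' ⊢ <;> omega

lemma intPairS_cellFrom_eq_sigmaCell_iff (hd : 2 ≤ d) {y x x' : Pt d} {z z' : Fin d → Sgn}
    {i i' : Fin d} :
    (IntPairS (d - 2) univ z z' ∧ cellFrom y univ z = sigmaCell x i ∧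
        cellFrom y univ z' = sigmaCell x' i') ↔
      (z, z') = (faceLabel i (cupSide i i'), faceLabel i' !cupSide i' i) ∧
        i ≠ i' ∧ y = adjCube x i (cupSide i i') ∧ y = adjCube x' i' !cupSide i' i := by
  simp only [cellFrom_univ_eq_sigmaCell_iff, Prod.mk.injEq]
  constructor
  · rintro ⟨hp, ⟨b, rfl, hy⟩, ⟨b', rfl, hy'⟩⟩
    obtain ⟨hii, rfl, rfl⟩ := (intPairS_faceLabel_iff hd).1 hp
    exact ⟨⟨rfl, rfl⟩, hii, hy, hy'⟩
  · rintro ⟨⟨rfl, rfl⟩, hii, hy, hy'⟩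
    exact ⟨(intPairS_faceLabel_iff hd).2 ⟨hii, rfl, rfl⟩, ⟨_, rfl, hy⟩, ⟨_, rfl, hy'⟩⟩

lemma latCup_indLat_sigmaCell_apply (hd : 2 ≤ d) (x x' y : Pt d) (i i' : Fin d) :
    latCup (d - 2) (indLat (sigmaCell x i)) (indLat (sigmaCell x' i')) (y, univ) =
      if y = adjCube x i (cupSide i i') then
        (if i ≠ i' ∧ adjCube x i (cupSide i i') = adjCube x' i' !cupSide i' i then 1 else 0)
      else 0 := by
  classical
  rw [latCup, sum_filter]
  have hterm : ∀ p : (Fin d → Sgn) × (Fin d → Sgn),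
      (if IntPairS (d - 2) univ p.1 p.2 then
        indLat (sigmaCell x i) (cellFrom y univ p.1) *
          indLat (sigmaCell x' i') (cellFrom y univ p.2)
        else 0) =
      if p = (faceLabel i (cupSide i i'), faceLabel i' !cupSide i' i) ∧ i ≠ i' ∧
        y = adjCube x i (cupSide i i') ∧ y = adjCube x' i' !cupSide i' i then 1 else 0 := by
    intro p
    rw [← Prod.mk.eta (p := p), ← if_congr (intPairS_cellFrom_eq_sigmaCell_iff hd) rfl rfl]
    simp only [indLat]
    split_ifs <;> simp_all
  rw [sum_congr rfl fun p _ => hterm p]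
  simp only [ite_and]
  rw [sum_ite_eq' univ, if_pos (mem_univ _)]
  by_cases hy : y = adjCube x i (cupSide i i') <;> simp [hy]

lemma finsum_ite_eq_add_ite_eq {α M : Type*} [AddCommMonoid M] [DecidableEq α] (a b : α)
    (u v : M) : ∑ᶠ y, ((if y = a then u else 0) + (if y = b then v else 0)) = u + v := by
  have hfin : ∀ c : α, ∀ w : M, (Function.support fun y => if y = c then w else 0).Finite :=
    fun c w => (Set.finite_singleton c).subset fun y hy => by_contra fun h => hy (if_neg h)
  rw [finsum_add_distrib (hfin a u) (hfin b v), finsum_eq_single _ a fun y hy => if_neg hy,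
    finsum_eq_single _ b fun y hy => if_neg hy, if_pos rfl, if_pos rfl]

lemma intLat_latCup_add_latCup_eq_cupSide (hd : 2 ≤ d) (x x' : Pt d) (i i' : Fin d) :
    intLat (latCup (d - 2) (indLat (sigmaCell x i)) (indLat (sigmaCell x' i'))
        + latCup (d - 2) (indLat (sigmaCell x' i')) (indLat (sigmaCell x i))) =
      (if i ≠ i' ∧ adjCube x i (cupSide i i') = adjCube x' i' !cupSide i' i then 1 else 0) +
        (if i' ≠ i ∧ adjCube x' i' (cupSide i' i) = adjCube x i !cupSide i i' then 1 else 0) := by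
  simp only [intLat, Pi.add_apply, latCup_indLat_sigmaCell_apply hd]
  exact finsum_ite_eq_add_ite_eq _ _ _ _

lemma cupSide_xor_hopParity {i i' : Fin d} (h : i ≠ i') :
    xor (cupSide i i') (hopParity d i) = xor (!cupSide i' i) (hopParity d i') := by
  rcases lt_or_gt_of_ne h with h | h <;>
    simp only [cupSide, hopParity, h, not_lt_of_gt h, if_true, if_false] <;>
    rw [Bool.eq_iff_iff] <;> simp <;> omega

lemma ite_add_ite_eq_of_xor_eq {α : Type*} [DecidableEq α] {f g : Bool → α} {a b p q : Bool}
    (h : xor a p = xor b q) :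
    ((if f a = g b then 1 else 0) + (if f (!a) = g (!b) then 1 else 0) : ZMod 2) =
      (if f p = g q then 1 else 0) + (if f (!p) = g (!q) then 1 else 0) := by
  cases a <;> cases b <;> cases p <;> cases q <;> simp_all [add_comm]

lemma intLat_latCup_add_latCup_eq_hopParity (hd : 2 ≤ d) (x x' : Pt d) (i i' : Fin d) :
    intLat (latCup (d - 2) (indLat (sigmaCell x i)) (indLat (sigmaCell x' i'))
        + latCup (d - 2) (indLat (sigmaCell x' i')) (indLat (sigmaCell x i))) =
      (if adjCube x i (hopParity d i) = adjCube x' i' (hopParity d i') then 1 else 0) +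
        (if adjCube x i (!hopParity d i) = adjCube x' i' (!hopParity d i') then 1 else 0) := by
  rw [intLat_latCup_add_latCup_eq_cupSide hd]
  by_cases hii : i = i'
  · subst hii
    simp only [adjCube_inj, ne_eq, not_true_eq_false, false_and, if_false, add_zero]
    exact (CharTwo.add_self_eq_zero _).symm
  · simp only [ne_eq, hii, Ne.symm hii, not_false_eq_true, true_and, eq_comm (a := adjCube x' i' _)]
    simpa using ite_add_ite_eq_of_xor_eq (f := adjCube x i) (g := adjCube x' i')
      (cupSide_xor_hopParity hii)

lemma ite_mul_ite_eq_neg_one_pow {R : Type*} [Ring R] (P Q : Prop) [Decidable P] [Decidable Q] :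
    ((if P then 1 else -1) * (if Q then 1 else -1) : R) =
      (-1) ^ ((if P then 1 else 0) + (if Q then 1 else 0) : ZMod 2).val := by
  split_ifs <;> simp [ZMod.val_one, show (1 + 1 : ZMod 2) = 0 from rfl]

end

theorem hopping_commutation (d : ℕ) (hd : 2 ≤ d) (x x' : Pt d) (i i' : Fin d) :
    Sop x i * Sop x' i' =
      ((-1 : ℂ) ^
        (intLat (latCup (d - 2) (indLat (sigmaCell x i)) (indLat (sigmaCell x' i'))
          + latCup (d - 2) (indLat (sigmaCell x' i')) (indLat (sigmaCell x i)))).val) •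
        (Sop x' i' * Sop x i) := by
  rw [Sop_mul_Sop, intLat_latCup_add_latCup_eq_hopParity hd, ite_mul_ite_eq_neg_one_pow]
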